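/- arXiv:1905.10116 — 5 statements merged into one kernel-verified Lean document; each statement's English description precedes it below -/
import Mathlib

section
/- Let ρ : Z → ℝ^p be measurable with E[y·φ ∣ 𝔪] = ρ ∘ z almost surely, and define θ0(z') := Σ0(z')⁻¹·ρ(z'). Then the doubly robust moment is universally Neyman orthogonal with respect to the nuisances (θ, Σ⁻¹): almost surely, (i) E[I_p − Σ0(z)⁻¹·φ φᵀ ∣ 𝔪] = 0 (the conditional expectation of the derivative of the doubly robust moment in the θ direction vanishes at the true nuisances), and (ii) E[φ·(y − ⟨θ0(z), φ⟩) ∣ 𝔪] = 0 (the conditional expectation of the derivative in the Σ⁻¹ direction vanishes at the true nuisances). -/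
open MeasureTheory Matrix

/-! Both identities come from pulling the `𝔪`-measurable factors `Σ0(z)⁻¹` and `θ0(z)` out of
the conditional expectation: `E[Σ0⁻¹ φ φᵀ | 𝔪] = Σ0⁻¹ Σ0 = I` and
`E[φ ⟨θ0, φ⟩ | 𝔪] = Σ0 θ0 = ρ = E[y φ | 𝔪]`. These factors are unbounded, so the individual
products need not be integrable; the pull-out is carried out on the `𝔪`-measurable sets where
the factors are bounded by `N`, which exhaust `Ω`. -/

lemma measurable_inv_apply {Z n : Type*} [MeasurableSpace Z] [Fintype n] [DecidableEq n]
    {M : Z → Matrix n n ℝ} (hM : ∀ i j, Measurable fun x => M x i j) (i j : n) :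
    Measurable fun x => (M x)⁻¹ i j := by
  have hM' : Measurable fun x i j => M x i j :=
    measurable_pi_iff.2 fun i => measurable_pi_iff.2 (hM i)
  have hdet : Continuous fun N : n → n → ℝ => (Matrix.of N).det := continuous_id.matrix_det
  have hadj : Continuous fun N : n → n → ℝ => (Matrix.of N).adjugate i j :=
    continuous_id.matrix_adjugate.matrix_elem i j
  simp_rw [Matrix.inv_def, Matrix.smul_apply, Ring.inverse_eq_inv', smul_eq_mul]
  exact (hdet.measurable.comp hM').inv.mul (hadj.measurable.comp hM')

section PullOut

variable {Ω ι : Type*} [Fintype ι] {m m0 : MeasurableSpace Ω} {μ : Measure Ω} {f g : ι → Ω → ℝ}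

lemma condExp_sum_mul_of_stronglyMeasurable_of_bounded (hm : m ≤ m0)
    (hf : ∀ k, StronglyMeasurable[m] (f k)) {C : ℝ} (hfC : ∀ k, ∀ᵐ ω ∂μ, ‖f k ω‖ ≤ C)
    (hg : ∀ k, Integrable (g k) μ) :
    μ[fun ω => ∑ k, f k ω * g k ω | m] =ᵐ[μ] fun ω => ∑ k, f k ω * μ[g k | m] ω := by
  have hfg : ∀ k, Integrable (f k * g k) μ := fun k =>
    (hg k).bdd_mul ((hf k).mono hm).aestronglyMeasurable (hfC k)
  have hpull : ∀ᵐ ω ∂μ, ∀ k, μ[f k * g k | m] ω = f k ω * μ[g k | m] ω :=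
    ae_all_iff.2 fun k => condExp_mul_of_stronglyMeasurable_left (hf k) (hfg k) (hg k)
  have hsum := condExp_finsetSum (s := Finset.univ) (fun k _ => hfg k) m
  simp only [Finset.sum_fn, Pi.mul_apply] at hsum
  filter_upwards [hsum, hpull] with ω hω hωk
  simp only [hω, hωk]

lemma condExp_sum_mul_of_stronglyMeasurable_left [IsFiniteMeasure μ] (hm : m ≤ m0)
    (hf : ∀ k, StronglyMeasurable[m] (f k)) (hg : ∀ k, Integrable (g k) μ)
    (hfg : Integrable (fun ω => ∑ k, f k ω * g k ω) μ) :
    μ[fun ω => ∑ k, f k ω * g k ω | m] =ᵐ[μ] fun ω => ∑ k, f k ω * μ[g k | m] ω := by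
  set s : ℕ → Set Ω := fun N => {ω | ∀ k, ‖f k ω‖ ≤ N}
  have hs : ∀ N, MeasurableSet[m] (s N) := fun N => by
    simp only [s, Set.ofPred_forall]
    exact .iInter fun k => (hf k).norm.measurable measurableSet_Iic
  have hs_univ : ⋃ N, s N = Set.univ := Set.eq_univ_of_forall fun ω => Set.mem_iUnion.2 <|
    (exists_nat_ge (∑ k, ‖f k ω‖)).imp fun N hN k =>
      (Finset.single_le_sum (fun k _ => norm_nonneg (f k ω)) (Finset.mem_univ k)).trans hN
  suffices ∀ N, ∀ᵐ ω ∂μ.restrict (s N), μ[fun ω => ∑ k, f k ω * g k ω | m] ω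
      = ∑ k, f k ω * μ[g k | m] ω by
    have := (ae_restrict_iUnion_iff s _).2 this
    rwa [hs_univ, Measure.restrict_univ] at this
  intro N
  have hfN : ∀ k, ∀ᵐ ω ∂μ.restrict (s N), ‖f k ω‖ ≤ N := fun k =>
    ae_restrict_of_forall_mem (hm _ (hs N)) fun ω hω => hω k
  have hgN : ∀ᵐ ω ∂μ.restrict (s N), ∀ k, (μ.restrict (s N))[g k | m] ω = μ[g k | m] ω :=
    ae_all_iff.2 fun k => condExp_restrict_ae_eq_restrict hm (hs N) (hg k)
  filter_upwards [(condExp_restrict_ae_eq_restrict hm (hs N) hfg).symm,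
    condExp_sum_mul_of_stronglyMeasurable_of_bounded hm hf hfN fun k => (hg k).restrict, hgN]
    with ω h₁ h₂ h₃
  simp only [h₁, h₂, h₃]

lemma condExp_sub_sum_mul_ae_eq_zero [IsFiniteMeasure μ] (hm : m ≤ m0)
    {G H : Ω → ℝ} {h : ι → Ω → ℝ} (hf : ∀ k, StronglyMeasurable[m] (f k))
    (hG : Integrable G μ) (hGH : μ[G | m] =ᵐ[μ] H)
    (hg : ∀ k, Integrable (g k) μ) (hgh : ∀ k, μ[g k | m] =ᵐ[μ] h k)
    (hH : ∀ᵐ ω ∂μ, H ω = ∑ k, f k ω * h k ω) :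
    μ[fun ω => G ω - ∑ k, f k ω * g k ω | m] =ᵐ[μ] 0 := by
  by_cases hF : Integrable (fun ω => G ω - ∑ k, f k ω * g k ω) μ
  swap
  · rw [condExp_of_not_integrable hF]
  have hfg : Integrable (fun ω => ∑ k, f k ω * g k ω) μ :=
    (hG.sub hF).congr (.of_forall fun ω => sub_sub_cancel _ _)
  have hsub : μ[fun ω => G ω - ∑ k, f k ω * g k ω | m]
      =ᵐ[μ] μ[G | m] - μ[fun ω => ∑ k, f k ω * g k ω | m] :=
    condExp_sub hG hfg m
  filter_upwards [hsub, hGH, hH,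
    condExp_sum_mul_of_stronglyMeasurable_left hm hf hg hfg, ae_all_iff.2 hgh]
    with ω h₁ h₂ h₃ h₄ h₅
  simp only [h₁, Pi.sub_apply, h₂, h₃, h₄, h₅, sub_self, Pi.zero_apply]

end PullOut

theorem doubly_robust_universal_orthogonality_general
    {Ω Z A : Type*} [MeasurableSpace Ω] [MeasurableSpace Z] [MeasurableSpace A]
    (μ : Measure Ω) [IsProbabilityMeasure μ]
    (z : Ω → Z) (a : Ω → A) (y : Ω → ℝ)
    (hz : Measurable z)
    (p : ℕ)
    (φ : A → Z → Fin p → ℝ)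
    (hφ2 : ∀ i, MemLp (fun ω => φ (a ω) (z ω) i) 2 μ)
    (hyφ : ∀ i, Integrable (fun ω => y ω * φ (a ω) (z ω) i) μ)
    (S0 : Z → Matrix (Fin p) (Fin p) ℝ)
    (hS0meas : ∀ i j, Measurable fun z' => S0 z' i j)
    (hS0 : ∀ i j, μ[fun ω => φ (a ω) (z ω) i * φ (a ω) (z ω) j |
        MeasurableSpace.comap z inferInstance] =ᵐ[μ] fun ω => S0 (z ω) i j)
    (hS0inv : ∀ᵐ ω ∂μ, IsUnit (S0 (z ω)))
    -- cross moment of outcome and features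
    (ρ : Z → Fin p → ℝ) (hρmeas : Measurable ρ)
    (hρ : ∀ i, μ[fun ω => y ω * φ (a ω) (z ω) i |
        MeasurableSpace.comap z inferInstance] =ᵐ[μ] fun ω => ρ (z ω) i)
    -- the projection coefficient θ0(z) := Σ0(z)⁻¹ ρ(z)
    (θ0 : Z → Fin p → ℝ) (hθ0def : ∀ z', θ0 z' = (S0 z')⁻¹ *ᵥ ρ z') :
    -- (i) derivative in the θ direction has vanishing conditional expectation
    (∀ i j, μ[fun ω => (1 : Matrix (Fin p) (Fin p) ℝ) i j
          - ((S0 (z ω))⁻¹ *ᵥ φ (a ω) (z ω)) i * φ (a ω) (z ω) j |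
        MeasurableSpace.comap z inferInstance] =ᵐ[μ] 0) ∧
    -- (ii) derivative in the Σ⁻¹ direction has vanishing conditional expectation
    (∀ i, μ[fun ω => φ (a ω) (z ω) i * (y ω - θ0 (z ω) ⬝ᵥ φ (a ω) (z ω)) |
        MeasurableSpace.comap z inferInstance] =ᵐ[μ] 0) := by
  have hm := hz.comap_le
  have hzm : Measurable[MeasurableSpace.comap z inferInstance] z := comap_measurable z
  have hφφ : ∀ i j, Integrable (fun ω => φ (a ω) (z ω) i * φ (a ω) (z ω) j) μ :=
    fun i j => (hφ2 i).integrable_mul (hφ2 j)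
  have hSinv : ∀ i k, StronglyMeasurable[MeasurableSpace.comap z inferInstance]
      fun ω => (S0 (z ω))⁻¹ i k :=
    fun i k => ((measurable_inv_apply hS0meas i k).comp hzm).stronglyMeasurable
  have hθ0 : ∀ k, Measurable fun z' => θ0 z' k := fun k => by
    simp only [hθ0def, mulVec, dotProduct]
    exact Finset.measurable_sum _ fun l _ =>
      (measurable_inv_apply hS0meas k l).mul ((measurable_pi_apply l).comp hρmeas)
  refine ⟨fun i j => ?_, fun i => ?_⟩
  · convert condExp_sub_sum_mul_ae_eq_zero hm (fun k => hSinv i k) (integrable_const _)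
      (.of_eq (condExp_const hm ((1 : Matrix (Fin p) (Fin p) ℝ) i j))) (fun k => hφφ k j)
      (fun k => hS0 k j) ?_ using 3 with ω
    · simp [mulVec, dotProduct, Finset.sum_mul, mul_assoc]
    filter_upwards [hS0inv] with ω hω
    rw [← mul_apply, nonsing_inv_mul _ ((isUnit_iff_isUnit_det _).1 hω)]
  · convert condExp_sub_sum_mul_ae_eq_zero hm
      (fun k => ((hθ0 k).comp hzm).stronglyMeasurable) (hyφ i) (hρ i) (fun k => hφφ i k)
      (fun k => hS0 i k) ?_ using 3 with ω
    · simp [dotProduct, mul_sub, Finset.mul_sum, mul_comm, mul_left_comm]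
    filter_upwards [hS0inv] with ω hω
    calc ρ (z ω) i = (S0 (z ω) *ᵥ θ0 (z ω)) i := by
          rw [hθ0def, mulVec_mulVec, mul_nonsing_inv _ ((isUnit_iff_isUnit_det _).1 hω),
            one_mulVec]
      _ = ∑ k, θ0 (z ω) k * S0 (z ω) i k := by simp only [mulVec, dotProduct, mul_comm]

/-- Universal Neyman orthogonality of the doubly robust moment:
at the true nuisances `(θ0, Σ0⁻¹)`, the conditional expectations of the
derivatives in the `θ` direction and in the `Σ⁻¹` direction vanish. -/
theorem doubly_robust_universal_orthogonality
    {Ω Z A : Type*} [MeasurableSpace Ω] [MeasurableSpace Z] [MeasurableSpace A]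
    (μ : Measure Ω) [IsProbabilityMeasure μ]
    (z : Ω → Z) (a : Ω → A) (y : Ω → ℝ)
    (hz : Measurable z) (ha : Measurable a) (hy : Measurable y)
    (p : ℕ) (hp : 0 < p)
    (φ : A → Z → Fin p → ℝ)
    (hφ : Measurable fun q : A × Z => φ q.1 q.2)
    (hφ2 : ∀ i, MemLp (fun ω => φ (a ω) (z ω) i) 2 μ)
    (hyφ : ∀ i, Integrable (fun ω => y ω * φ (a ω) (z ω) i) μ)
    (S0 : Z → Matrix (Fin p) (Fin p) ℝ)
    (hS0meas : ∀ i j, Measurable fun z' => S0 z' i j)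
    (hS0 : ∀ i j, μ[fun ω => φ (a ω) (z ω) i * φ (a ω) (z ω) j |
        MeasurableSpace.comap z inferInstance] =ᵐ[μ] fun ω => S0 (z ω) i j)
    (hS0inv : ∀ᵐ ω ∂μ, IsUnit (S0 (z ω)))
    -- cross moment of outcome and features
    (ρ : Z → Fin p → ℝ) (hρmeas : Measurable ρ)
    (hρ : ∀ i, μ[fun ω => y ω * φ (a ω) (z ω) i |
        MeasurableSpace.comap z inferInstance] =ᵐ[μ] fun ω => ρ (z ω) i)
    -- the projection coefficient θ0(z) := Σ0(z)⁻¹ ρ(z)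
    (θ0 : Z → Fin p → ℝ) (hθ0def : ∀ z', θ0 z' = (S0 z')⁻¹ *ᵥ ρ z') :
    -- (i) derivative in the θ direction has vanishing conditional expectation
    (∀ i j, μ[fun ω => (1 : Matrix (Fin p) (Fin p) ℝ) i j
          - ((S0 (z ω))⁻¹ *ᵥ φ (a ω) (z ω)) i * φ (a ω) (z ω) j |
        MeasurableSpace.comap z inferInstance] =ᵐ[μ] 0) ∧
    -- (ii) derivative in the Σ⁻¹ direction has vanishing conditional expectation
    (∀ i, μ[fun ω => φ (a ω) (z ω) i * (y ω - θ0 (z ω) ⬝ᵥ φ (a ω) (z ω)) |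
        MeasurableSpace.comap z inferInstance] =ᵐ[μ] 0) :=
  doubly_robust_universal_orthogonality_general μ z a y hz p φ hφ2 hyφ S0 hS0meas hS0 hS0inv ρ
    hρmeas hρ θ0 hθ0def
end

section
/- Let (Ω, ℱ, P) be a probability space, Z a measurable space, z : Ω → Z measurable, and Γ : Z → ℝ measurable with |Γ(z)| ≤ 1 almost surely. For measurable binary policies π, π* : Z → {0, 1}, define v(π) := Γ(z)·(2·π(z) − 1) and V(π) := E[v(π)]. Then the self-bounded Lipschitz property holds with constants C = 1 and L = 2: Var(v(π)) − Var(v(π*)) ≤ 2·|V(π) − V(π*)|. -/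
/-!
Since `π` takes values in `{0, 1}`, `(2π − 1)² = 1`, so `v(π)² = Γ(z)²` does not depend on the
policy and both policies have the same second moment. The difference of variances is therefore
`V(π*)² − V(π)² = (V(π*) − V(π)) (V(π*) + V(π))`, and `|V(π*) + V(π)| ≤ 2` because `|v| ≤ 1`.
-/

open MeasureTheory ProbabilityTheory

lemma sq_sub_sq_le_two_mul_mul_abs_sub {a b c : ℝ} (ha : |a| ≤ c) (hb : |b| ≤ c) :
    b ^ 2 - a ^ 2 ≤ 2 * c * |a - b| := by
  have hsum : |b + a| ≤ 2 * c := (abs_add_le b a).trans (by linarith)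
  calc b ^ 2 - a ^ 2 = (b - a) * (b + a) := by ring
    _ ≤ |b - a| * |b + a| := (le_abs_self _).trans_eq (abs_mul _ _)
    _ ≤ |b - a| * (2 * c) := mul_le_mul_of_nonneg_left hsum (abs_nonneg _)
    _ = 2 * c * |a - b| := by rw [abs_sub_comm]; ring

section Variance

variable {Ω : Type*} [MeasurableSpace Ω] {μ : Measure Ω} [IsProbabilityMeasure μ] {X Y : Ω → ℝ}

lemma variance_sub_variance_of_sq_ae_eq (hX : MemLp X 2 μ) (hY : MemLp Y 2 μ)
    (hXY : X ^ 2 =ᵐ[μ] Y ^ 2) : variance X μ - variance Y μ = μ[Y] ^ 2 - μ[X] ^ 2 := by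
  rw [variance_eq_sub hX, variance_eq_sub hY, integral_congr_ae hXY]
  ring

lemma variance_sub_variance_le_of_sq_ae_eq {c : ℝ} (hXm : AEStronglyMeasurable X μ)
    (hYm : AEStronglyMeasurable Y μ) (hXc : ∀ᵐ ω ∂μ, |X ω| ≤ c) (hXY : X ^ 2 =ᵐ[μ] Y ^ 2) :
    variance X μ - variance Y μ ≤ 2 * c * |μ[X] - μ[Y]| := by
  have hYc : ∀ᵐ ω ∂μ, |Y ω| ≤ c := by
    filter_upwards [hXc, hXY] with ω hω hωXY
    rwa [← (sq_eq_sq_iff_abs_eq_abs _ _).mp hωXY]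
  have hX : MemLp X 2 μ := .of_bound hXm c hXc
  have hY : MemLp Y 2 μ := .of_bound hYm c hYc
  have hmean : ∀ {W : Ω → ℝ}, (∀ᵐ ω ∂μ, ‖W ω‖ ≤ c) → |μ[W]| ≤ c := fun hW => by
    simpa using norm_integral_le_of_norm_le_const hW
  rw [variance_sub_variance_of_sq_ae_eq hX hY hXY]
  exact sq_sub_sq_le_two_mul_mul_abs_sub (hmean hXc) (hmean hYc)

end Variance

lemma abs_two_mul_sub_one_of_eq_zero_or_eq_one {p : ℝ} (hp : p = 0 ∨ p = 1) :
    |2 * p - 1| = 1 := by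
  rcases hp with rfl | rfl <;> norm_num

/-- Self-bounded Lipschitz property for binary policies with `|Γ(z)| ≤ 1`:
`Var(v(π)) − Var(v(π*)) ≤ 2 |V(π) − V(π*)|` (constants C = 1, L = 2). -/
theorem binary_policy_self_bounded_lipschitz
    {Ω Z : Type*} [MeasurableSpace Ω] [MeasurableSpace Z]
    (μ : Measure Ω) [IsProbabilityMeasure μ]
    (z : Ω → Z) (hz : Measurable z)
    (Γ : Z → ℝ) (hΓ : Measurable Γ)
    (hΓbdd : ∀ᵐ ω ∂μ, |Γ (z ω)| ≤ 1)
    (π πs : Z → ℝ) (hπ : Measurable π) (hπs : Measurable πs)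
    (hπ01 : ∀ z', π z' = 0 ∨ π z' = 1) (hπs01 : ∀ z', πs z' = 0 ∨ πs z' = 1) :
    variance (fun ω => Γ (z ω) * (2 * π (z ω) - 1)) μ
        - variance (fun ω => Γ (z ω) * (2 * πs (z ω) - 1)) μ
      ≤ 2 * |(∫ ω, Γ (z ω) * (2 * π (z ω) - 1) ∂μ)
          - ∫ ω, Γ (z ω) * (2 * πs (z ω) - 1) ∂μ| := by
  have hmeas : ∀ p : Z → ℝ, Measurable p →
      AEStronglyMeasurable (fun ω => Γ (z ω) * (2 * p (z ω) - 1)) μ := fun p hp =>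
    ((hΓ.comp hz).mul (((hp.comp hz).const_mul 2).sub_const 1)).aestronglyMeasurable
  have habs : ∀ p : Z → ℝ, (∀ z', p z' = 0 ∨ p z' = 1) →
      ∀ ω, |Γ (z ω) * (2 * p (z ω) - 1)| = |Γ (z ω)| := fun p hp ω => by
    rw [abs_mul, abs_two_mul_sub_one_of_eq_zero_or_eq_one (hp _), mul_one]
  have hbdd : ∀ᵐ ω ∂μ, |Γ (z ω) * (2 * π (z ω) - 1)| ≤ 1 := by
    filter_upwards [hΓbdd] with ω hω
    rwa [habs π hπ01]
  have hsq : (fun ω => Γ (z ω) * (2 * π (z ω) - 1)) ^ 2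
      =ᵐ[μ] (fun ω => Γ (z ω) * (2 * πs (z ω) - 1)) ^ 2 :=
    .of_forall fun ω => by
      simp only [Pi.pow_apply, ← sq_abs (Γ (z ω) * _), habs π hπ01, habs πs hπs01]
  simpa using variance_sub_variance_le_of_sq_ae_eq (hmeas π hπ) (hmeas πs hπs) hbdd hsq
end

section
/- For all real numbers r and S with 0 < r ≤ S, the entropy integral of a VC-subgraph class satisfies ∫₀^r √(1 + log(S/ε)) dε ≤ 2·r·√(1 + log(S/r)), where log denotes the natural logarithm. -/
/-!
Concavity of `√` bounds the integrand by its tangent line at `ε = r`: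
`√(1 + log (S/ε)) ≤ √a + log (r/ε) / (2√a)` with `a = 1 + log (S/r) ≥ 1`.
Since `∫₀^r log (r/ε) dε = r`, the integral is at most `r√a + r/(2√a) ≤ 2r√a`.
-/

open MeasureTheory intervalIntegral Set Real
open scoped Interval

theorem Real.sqrt_le_sqrt_add_sub_div_two_mul_sqrt {a t : ℝ} (ha : 0 < a) (ht : 0 ≤ t) :
    √t ≤ √a + (t - a) / (2 * √a) := by
  have hsa : 0 < √a := sqrt_pos.mpr ha
  rw [← sub_le_iff_le_add', le_div_iff₀ (by positivity)]
  nlinarith [sq_nonneg (√t - √a), sq_sqrt ht, sq_sqrt ha.le]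

theorem integral_log_sub_log_zero (r : ℝ) : ∫ x in (0 : ℝ)..r, (log r - log x) = r := by
  rw [integral_sub intervalIntegrable_const intervalIntegrable_log',
    intervalIntegral.integral_const, integral_log]
  simp

theorem IntervalIntegrable.of_nonneg_of_le {μ : Measure ℝ} {f g : ℝ → ℝ} {a b : ℝ}
    (hab : a ≤ b) (hg : IntervalIntegrable g μ a b)
    (hf : AEStronglyMeasurable f (μ.restrict (Ι a b)))
    (hfg : ∀ x ∈ Ioc a b, 0 ≤ f x ∧ f x ≤ g x) : IntervalIntegrable f μ a b := by
  refine hg.mono_fun' hf (ae_restrict_of_forall_mem measurableSet_uIoc fun x hx => ?_)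
  rw [uIoc_of_le hab] at hx
  obtain ⟨hf0, hfg⟩ := hfg x hx
  simpa [abs_of_nonneg hf0] using hfg

theorem sqrt_one_add_log_div_le_tangent {x r S : ℝ} (hx : 0 < x) (hxr : x ≤ r) (hrS : r ≤ S) :
    √(1 + log (S / x)) ≤
      √(1 + log (S / r)) + (log r - log x) / (2 * √(1 + log (S / r))) := by
  have hr : 0 < r := hx.trans_le hxr
  have hS : 0 < S := hr.trans_le hrS
  have hlog_r : 0 ≤ log (S / r) := log_nonneg ((one_le_div hr).mpr hrS)
  have hlog_x : 0 ≤ log (S / x) := log_nonneg ((one_le_div hx).mpr (hxr.trans hrS))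
  have hdiff : 1 + log (S / x) - (1 + log (S / r)) = log r - log x := by
    rw [log_div hS.ne' hx.ne', log_div hS.ne' hr.ne']; ring
  simpa only [hdiff] using sqrt_le_sqrt_add_sub_div_two_mul_sqrt (t := 1 + log (S / x))
    (by linarith : 0 < 1 + log (S / r)) (by linarith)

/-- For `0 < r ≤ S`,
`∫₀^r √(1 + log(S/ε)) dε ≤ 2 r √(1 + log(S/r))`. -/
theorem vc_entropy_integral_bound (r S : ℝ) (hr : 0 < r) (hrS : r ≤ S) :
    (∫ ε in (0:ℝ)..r, Real.sqrt (1 + Real.log (S / ε)))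
      ≤ 2 * r * Real.sqrt (1 + Real.log (S / r)) := by
  set a := 1 + log (S / r)
  have hsa : 1 ≤ √a := one_le_sqrt.mpr (by linarith [log_nonneg ((one_le_div hr).mpr hrS)])
  set g : ℝ → ℝ := fun ε => √a + (log r - log ε) / (2 * √a)
  have hlog : IntervalIntegrable (fun ε => (log r - log ε) / (2 * √a)) volume 0 r :=
    (intervalIntegrable_const.sub intervalIntegrable_log').div_const _
  have hg : IntervalIntegrable g volume 0 r := intervalIntegrable_const.add hlog
  have hfg : ∀ ε ∈ Ioc 0 r, 0 ≤ √(1 + log (S / ε)) ∧ √(1 + log (S / ε)) ≤ g ε :=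
    fun ε hε => ⟨sqrt_nonneg _, sqrt_one_add_log_div_le_tangent hε.1 hε.2 hrS⟩
  have hf : IntervalIntegrable (fun ε => √(1 + log (S / ε))) volume 0 r :=
    .of_nonneg_of_le hr.le hg (Measurable.aestronglyMeasurable (by fun_prop)) hfg
  calc (∫ ε in (0:ℝ)..r, √(1 + log (S / ε)))
      ≤ ∫ ε in (0:ℝ)..r, g ε :=
        integral_mono_on_of_le_Ioo hr.le hf hg fun ε hε => (hfg ε (Ioo_subset_Ioc_self hε)).2
    _ = r * √a + r / (2 * √a) := by
        rw [integral_add intervalIntegrable_const hlog, intervalIntegral.integral_const,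
          intervalIntegral.integral_div, integral_log_sub_log_zero, sub_zero, smul_eq_mul]
    _ ≤ 2 * r * √a := by
        have : r / (2 * √a) ≤ r * √a := by
          rw [div_le_iff₀ (by positivity)]
          nlinarith [mul_le_mul hsa hsa zero_le_one (by positivity)]
        linarith
end

section
/- Let H : ℝ → ℝ be nonnegative and nonincreasing on (0, ∞), let n > 0, and suppose ε ↦ √(H(ε)/n) is integrable on bounded subintervals of (0, ∞). For r > 0 define the entropy integral κ(r) := inf over α ∈ (0, r] of (4·α + 10·∫_α^r √(H(ε)/n) dε). Then for every r > 0 and s ≥ 0, κ(r + s) ≤ κ(r) + 10·s·√(H(r)/n). -/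
open MeasureTheory

/-- Increment bound for the entropy integral
`κ(r) = inf_{0 < α ≤ r} (4α + 10 ∫_α^r √(H(ε)/n) dε)`:
for every `r > 0` and `s ≥ 0`, `κ(r + s) ≤ κ(r) + 10 s √(H(r)/n)`. -/
theorem entropy_integral_increment_bound
    (H : ℝ → ℝ) (n : ℝ) (hn : 0 < n)
    (hH0 : ∀ x ∈ Set.Ioi (0:ℝ), 0 ≤ H x)
    (hHanti : AntitoneOn H (Set.Ioi (0:ℝ)))
    (hint : ∀ a b : ℝ, 0 < a → 0 < b →
      IntervalIntegrable (fun ε => Real.sqrt (H ε / n)) volume a b)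
    (κ : ℝ → ℝ)
    (hκ : ∀ r : ℝ, κ r = sInf {x : ℝ | ∃ α : ℝ, 0 < α ∧ α ≤ r ∧
      x = 4 * α + 10 * ∫ ε in α..r, Real.sqrt (H ε / n)}) :
    ∀ r > (0:ℝ), ∀ s ≥ (0:ℝ), κ (r + s) ≤ κ r + 10 * s * Real.sqrt (H r / n) := by
  intro r hr s hs
  have hrs : (0:ℝ) < r + s := by linarith
  rw [hκ (r + s), hκ r]
  set f : ℝ → ℝ := fun ε => Real.sqrt (H ε / n) with hf
  have hbdd : BddBelow {x : ℝ | ∃ α : ℝ, 0 < α ∧ α ≤ r + s ∧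
      x = 4 * α + 10 * ∫ ε in α..(r+s), f ε} := by
    refine ⟨0, ?_⟩
    rintro x ⟨α, hα, hαr, rfl⟩
    have hint0 : (0:ℝ) ≤ ∫ ε in α..(r+s), f ε :=
      intervalIntegral.integral_nonneg hαr (fun x _ => Real.sqrt_nonneg _)
    positivity
  have hne : {x : ℝ | ∃ α : ℝ, 0 < α ∧ α ≤ r ∧
      x = 4 * α + 10 * ∫ ε in α..r, f ε}.Nonempty :=
    ⟨4 * r + 10 * ∫ ε in r..r, f ε, r, hr, le_refl r, rfl⟩
  rw [← sub_le_iff_le_add]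
  refine le_csInf hne ?_
  rintro b ⟨α, hα, hαr, rfl⟩
  rw [sub_le_iff_le_add]
  have hmem : 4 * α + 10 * ∫ ε in α..(r+s), f ε ∈ {x : ℝ | ∃ α : ℝ, 0 < α ∧ α ≤ r + s ∧
      x = 4 * α + 10 * ∫ ε in α..(r+s), f ε} := ⟨α, hα, by linarith, rfl⟩
  refine (csInf_le hbdd hmem).trans ?_
  have hsplit : (∫ ε in α..(r+s), f ε) = (∫ ε in α..r, f ε) + ∫ ε in r..(r+s), f ε :=
    (intervalIntegral.integral_add_adjacent_intervals (hint α r hα hr) (hint r (r+s) hr hrs)).symm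
  have htail : (∫ ε in r..(r+s), f ε) ≤ s * Real.sqrt (H r / n) := by
    have hmono : (∫ ε in r..(r+s), f ε) ≤ ∫ _ in r..(r+s), Real.sqrt (H r / n) := by
      refine intervalIntegral.integral_mono_on (by linarith) (hint r (r+s) hr hrs)
        intervalIntegrable_const ?_
      intro x hx
      have hx0 : x ∈ Set.Ioi (0:ℝ) := lt_of_lt_of_le hr hx.1
      have : H x ≤ H r := hHanti (Set.mem_Ioi.mpr hr) hx0 hx.1
      exact Real.sqrt_le_sqrt (by gcongr)
    rwa [intervalIntegral.integral_const, smul_eq_mul, add_sub_cancel_left] at hmono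
  calc 4 * α + 10 * ∫ ε in α..(r+s), f ε
      = 4 * α + 10 * ((∫ ε in α..r, f ε) + ∫ ε in r..(r+s), f ε) := by rw [hsplit]
    _ ≤ 4 * α + 10 * ((∫ ε in α..r, f ε) + s * Real.sqrt (H r / n)) := by
        have := htail; nlinarith
    _ = (4 * α + 10 * ∫ ε in α..r, f ε) + 10 * s * Real.sqrt (H r / n) := by ring
end

section
/- Doubly robust personalized pricing estimators (quadratic revenue model). Let (Ω, ℱ, P) be a probability space, Z a measurable space, and z : Ω → Z, p : Ω → ℝ (price), r : Ω → ℝ (revenue) measurable, with all displayed conditional expectations well defined. Let 𝔪 and 𝔤 denote the σ-algebras generated by z and by (p, z) respectively. Suppose E[r ∣ 𝔤] = (a ∘ z)·p + (b ∘ z)·p² almost surely for measurable a, b : Z → ℝ, and let μ₂, μ₃, μ₄ : Z → ℝ be measurable with E[p^k ∣ 𝔪] = μ_k ∘ z almost surely for k = 2, 3, 4, and with D(z) := μ₂(z)·μ₄(z) − μ₃(z)² nonzero almost surely. For any measurable â, b̂ : Z → ℝ define a_DR := â(z) + ((μ₄(z)·p − μ₃(z)·p²)/D(z))·(r − â(z)·p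 − b̂(z)·p²) and b_DR := b̂(z) + ((μ₂(z)·p² − μ₃(z)·p)/D(z))·(r − â(z)·p − b̂(z)·p²). Then E[a_DR ∣ 𝔪] = a ∘ z and E[b_DR ∣ 𝔪] = b ∘ z almost surely. -/
/-! Write `e = r - â(z) p - b̂(z) p²` for the residual of the plugged-in revenue model. Since
`E[e ∣ p, z] = (a - â)(z) p + (b - b̂)(z) p²`, the tower property gives
`E[(p, p²) e ∣ z] = Σ₀(z) (θ - θ̂)(z)`, and the weights in `a_DR`, `b_DR` are the rows of `Σ₀(z)⁻¹`.
The σ(z)-measurable coefficients that get pulled out of conditional expectations along the way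
need not be bounded, so the pull-out is done on the σ(z)-measurable sets where they are bounded,
which exhaust `Ω`. -/

open MeasureTheory

namespace MeasureTheory

variable {Ω : Type*} {m g m₀ : MeasurableSpace Ω} {μ : Measure Ω}

theorem condExp_ae_eq_of_forall_restrict {E : Type*} [NormedAddCommGroup E] [NormedSpace ℝ E]
    [CompleteSpace E] (hm : m ≤ m₀) [SigmaFinite (μ.trim hm)] {f h : Ω → E}
    (hf : Integrable f μ) {ι : Type*} [Countable ι] {s : ι → Set Ω}
    (hs : ∀ i, MeasurableSet[m] (s i)) (hcover : ⋃ i, s i = Set.univ)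
    (hloc : ∀ i, (μ.restrict (s i))[f | m] =ᵐ[μ.restrict (s i)] h) : μ[f | m] =ᵐ[μ] h := by
  have := (ae_restrict_iUnion_iff s _).2 fun i =>
    (condExp_restrict_ae_eq_restrict hm (hs i) hf).symm.trans (hloc i)
  rwa [hcover, Measure.restrict_univ] at this

theorem condExp_sum_mul_of_bound (hm : m ≤ m₀) [IsFiniteMeasure μ] {ι : Type*} [Fintype ι]
    {c X : ι → Ω → ℝ} (hc : ∀ i, StronglyMeasurable[m] (c i)) (C : ℝ)
    (hC : ∀ i, ∀ᵐ ω ∂μ, ‖c i ω‖ ≤ C) (hX : ∀ i, Integrable (X i) μ) :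
    μ[fun ω => ∑ i, c i ω * X i ω | m] =ᵐ[μ] fun ω => ∑ i, c i ω * μ[X i | m] ω := by
  have hcX : ∀ i ∈ Finset.univ, Integrable (c i * X i) μ := fun i _ =>
    (hX i).bdd_mul ((hc i).mono hm).aestronglyMeasurable (hC i)
  have hpull : ∀ᵐ ω ∂μ, ∀ i, μ[c i * X i | m] ω = c i ω * μ[X i | m] ω :=
    ae_all_iff.2 fun i => condExp_stronglyMeasurable_mul_of_bound hm (hc i) (hX i) C (hC i)
  have hsum : (fun ω => ∑ i, c i ω * X i ω) = ∑ i, c i * X i := by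
    ext ω; simp [Finset.sum_apply]
  filter_upwards [hsum ▸ condExp_finsetSum hcX m, hpull] with ω hω hpullω
  simp [hω, Finset.sum_apply, hpullω]

theorem condExp_sum_mul_of_stronglyMeasurable (hm : m ≤ m₀) [IsFiniteMeasure μ] {ι : Type*}
    [Fintype ι] {c X : ι → Ω → ℝ} (hc : ∀ i, StronglyMeasurable[m] (c i))
    (hX : ∀ i, Integrable (X i) μ) (hcX : Integrable (fun ω => ∑ i, c i ω * X i ω) μ) :
    μ[fun ω => ∑ i, c i ω * X i ω | m] =ᵐ[μ] fun ω => ∑ i, c i ω * μ[X i | m] ω := by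
  set s : ℕ → Set Ω := fun n => ⋂ i, {ω | ‖c i ω‖ ≤ n}
  have hs : ∀ n, MeasurableSet[m] (s n) := fun n =>
    MeasurableSet.iInter fun i => (hc i).norm.measurable measurableSet_Iic
  have hcover : ⋃ n, s n = Set.univ := by
    refine Set.eq_univ_of_forall fun ω => Set.mem_iUnion.2 ?_
    obtain ⟨n, hn⟩ := exists_nat_ge (∑ i, ‖c i ω‖)
    exact ⟨n, Set.mem_iInter.2 fun i =>
      (Finset.single_le_sum (fun j _ => norm_nonneg (c j ω)) (Finset.mem_univ i)).trans hn⟩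
  refine condExp_ae_eq_of_forall_restrict hm hcX hs hcover fun n => ?_
  have hbound : ∀ i, ∀ᵐ ω ∂μ.restrict (s n), ‖c i ω‖ ≤ n := fun i =>
    (ae_restrict_mem (hm _ (hs n))).mono fun ω hω => Set.mem_iInter.1 hω i
  have hrestrict : ∀ᵐ ω ∂μ.restrict (s n), ∀ i, (μ.restrict (s n))[X i | m] ω = μ[X i | m] ω :=
    ae_all_iff.2 fun i => condExp_restrict_ae_eq_restrict hm (hs n) (hX i)
  filter_upwards [condExp_sum_mul_of_bound hm hc n hbound fun i => (hX i).restrict,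
    hrestrict] with ω hω hrestrictω
  simp only [hω, hrestrictω]

theorem condExp_quadratic_residual (hg : g ≤ m₀) [SigmaFinite (μ.trim hg)]
    {p r a b aHat bHat : Ω → ℝ}
    (hp : StronglyMeasurable[g] p) (haHat : StronglyMeasurable[g] aHat)
    (hbHat : StronglyMeasurable[g] bHat) (hr : Integrable r μ)
    (he : Integrable (fun ω => r ω - aHat ω * p ω - bHat ω * p ω ^ 2) μ)
    (hrev : μ[r | g] =ᵐ[μ] fun ω => a ω * p ω + b ω * p ω ^ 2) :
    μ[fun ω => r ω - aHat ω * p ω - bHat ω * p ω ^ 2 | g]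
      =ᵐ[μ] fun ω => (a ω - aHat ω) * p ω + (b ω - bHat ω) * p ω ^ 2 := by
  set fit : Ω → ℝ := fun ω => aHat ω * p ω + bHat ω * p ω ^ 2
  have hfit : Integrable fit μ :=
    (hr.sub he).congr (ae_of_all _ fun ω => by simp only [fit, Pi.sub_apply]; ring)
  have hresidual : (fun ω => r ω - aHat ω * p ω - bHat ω * p ω ^ 2) = r - fit := by
    ext ω; simp only [fit, Pi.sub_apply]; ring
  rw [hresidual]
  filter_upwards [condExp_sub hr hfit g, hrev] with ω hω hrevω
  rw [hω, Pi.sub_apply, hrevω,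
    condExp_of_stronglyMeasurable hg (f := fit) ((haHat.mul hp).add (hbHat.mul (hp.pow 2))) hfit]
  ring

theorem condExp_pow_mul_of_condExp_eq_quadratic (hmg : m ≤ g) (hg : g ≤ m₀) [IsFiniteMeasure μ]
    {p e α β M₁ M₂ : Ω → ℝ} (k : ℕ) (hp : StronglyMeasurable[g] p)
    (hα : StronglyMeasurable[m] α) (hβ : StronglyMeasurable[m] β)
    (he : μ[e | g] =ᵐ[μ] fun ω => α ω * p ω + β ω * p ω ^ 2) (he_int : Integrable e μ)
    (hpe : Integrable (fun ω => p ω ^ k * e ω) μ)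
    (hp₁ : Integrable (fun ω => p ω ^ (k + 1)) μ) (hp₂ : Integrable (fun ω => p ω ^ (k + 2)) μ)
    (hM₁ : μ[fun ω => p ω ^ (k + 1) | m] =ᵐ[μ] M₁)
    (hM₂ : μ[fun ω => p ω ^ (k + 2) | m] =ᵐ[μ] M₂) :
    μ[fun ω => p ω ^ k * e ω | m] =ᵐ[μ] fun ω => α ω * M₁ ω + β ω * M₂ ω := by
  have hg_cond : μ[fun ω => p ω ^ k * e ω | g]
      =ᵐ[μ] fun ω => α ω * p ω ^ (k + 1) + β ω * p ω ^ (k + 2) := by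
    refine (condExp_mul_of_stronglyMeasurable_left (hp.pow k) hpe he_int).trans ?_
    filter_upwards [he] with ω heω
    rw [Pi.mul_apply, Pi.pow_apply, heω]
    ring
  have hm_cond := condExp_sum_mul_of_stronglyMeasurable (μ := μ) (hmg.trans hg)
    (c := ![α, β]) (X := ![fun ω => p ω ^ (k + 1), fun ω => p ω ^ (k + 2)])
    (by simp [Fin.forall_fin_two, hα, hβ]) (by simp [Fin.forall_fin_two, hp₁, hp₂])
    (by simpa [Fin.sum_univ_two] using integrable_condExp.congr hg_cond)
  simp only [Fin.sum_univ_two, Matrix.cons_val_zero, Matrix.cons_val_one] at hm_cond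
  filter_upwards [(condExp_condExp_of_le hmg hg).symm.trans (condExp_congr_ae hg_cond),
    hm_cond, hM₁, hM₂] with ω h₁ h₂ h₃ h₄
  rw [h₁, h₂, h₃, h₄]

theorem condExp_add_quadratic_weight_mul (hm : m ≤ m₀) [IsFiniteMeasure μ]
    {p e θHat θ W w₁ w₂ Q₁ Q₂ : Ω → ℝ} (hθHat : StronglyMeasurable[m] θHat)
    (hw₁ : StronglyMeasurable[m] w₁) (hw₂ : StronglyMeasurable[m] w₂)
    (hW : ∀ ω, W ω = w₁ ω * p ω + w₂ ω * p ω ^ 2)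
    (hpe : Integrable (fun ω => p ω * e ω) μ) (hp2e : Integrable (fun ω => p ω ^ 2 * e ω) μ)
    (hQ₁ : μ[fun ω => p ω * e ω | m] =ᵐ[μ] Q₁) (hQ₂ : μ[fun ω => p ω ^ 2 * e ω | m] =ᵐ[μ] Q₂)
    (hint : Integrable (fun ω => θHat ω + W ω * e ω) μ)
    (hθ : ∀ᵐ ω ∂μ, θHat ω + (w₁ ω * Q₁ ω + w₂ ω * Q₂ ω) = θ ω) :
    μ[fun ω => θHat ω + W ω * e ω | m] =ᵐ[μ] θ := by
  have hexpand : (fun ω => θHat ω + W ω * e ω) = fun ω => ∑ i, ![θHat, w₁, w₂] i ω *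
      ![fun _ => 1, fun ω => p ω * e ω, fun ω => p ω ^ 2 * e ω] i ω := by
    ext ω; simp [Fin.sum_univ_three, hW, add_mul, mul_assoc, add_assoc]
  rw [hexpand] at hint ⊢
  filter_upwards [condExp_sum_mul_of_stronglyMeasurable hm
    (by simp [Fin.forall_fin_succ, hθHat, hw₁, hw₂])
    (by simp [Fin.forall_fin_succ, hpe, hp2e]) hint, hQ₁, hQ₂, hθ]
    with ω h h₁ h₂ h₃
  rw [← h₃, h]
  simp [Fin.sum_univ_three, condExp_const hm, h₁, h₂, add_assoc]

end MeasureTheory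

theorem pricing_quadratic_doubly_robust_general
    {Ω Z : Type*} [MeasurableSpace Ω] [MeasurableSpace Z]
    (μ : Measure Ω) [IsProbabilityMeasure μ]
    (z : Ω → Z) (pr r : Ω → ℝ)
    (hz : Measurable z) (hpr : Measurable pr)
    (a b : Z → ℝ) (ham : Measurable a) (hbm : Measurable b)
    (μ2 μ3 μ4 : Z → ℝ) (hμ2m : Measurable μ2) (hμ3m : Measurable μ3) (hμ4m : Measurable μ4)
    -- quadratic revenue model
    (hrev : μ[r | MeasurableSpace.comap (fun ω => (pr ω, z ω)) inferInstance]
        =ᵐ[μ] fun ω => a (z ω) * pr ω + b (z ω) * pr ω ^ 2)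
    -- conditional price moments
    (hm2 : μ[fun ω => pr ω ^ 2 | MeasurableSpace.comap z inferInstance]
        =ᵐ[μ] fun ω => μ2 (z ω))
    (hm3 : μ[fun ω => pr ω ^ 3 | MeasurableSpace.comap z inferInstance]
        =ᵐ[μ] fun ω => μ3 (z ω))
    (hm4 : μ[fun ω => pr ω ^ 4 | MeasurableSpace.comap z inferInstance]
        =ᵐ[μ] fun ω => μ4 (z ω))
    (hD : ∀ᵐ ω ∂μ, μ2 (z ω) * μ4 (z ω) - μ3 (z ω) ^ 2 ≠ 0)
    -- nuisance estimates
    (ah bh : Z → ℝ) (hahm : Measurable ah) (hbhm : Measurable bh)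
    -- all displayed conditional expectations are well defined
    (hintr : Integrable r μ)
    (hintp2 : Integrable (fun ω => pr ω ^ 2) μ)
    (hintp3 : Integrable (fun ω => pr ω ^ 3) μ)
    (hintp4 : Integrable (fun ω => pr ω ^ 4) μ)
    (hinte : Integrable (fun ω => r ω - ah (z ω) * pr ω - bh (z ω) * pr ω ^ 2) μ)
    (hintpe : Integrable (fun ω =>
      pr ω * (r ω - ah (z ω) * pr ω - bh (z ω) * pr ω ^ 2)) μ)
    (hintp2e : Integrable (fun ω =>
      pr ω ^ 2 * (r ω - ah (z ω) * pr ω - bh (z ω) * pr ω ^ 2)) μ)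
    (hintaDR : Integrable (fun ω => ah (z ω)
      + ((μ4 (z ω) * pr ω - μ3 (z ω) * pr ω ^ 2)
            / (μ2 (z ω) * μ4 (z ω) - μ3 (z ω) ^ 2))
        * (r ω - ah (z ω) * pr ω - bh (z ω) * pr ω ^ 2)) μ)
    (hintbDR : Integrable (fun ω => bh (z ω)
      + ((μ2 (z ω) * pr ω ^ 2 - μ3 (z ω) * pr ω)
            / (μ2 (z ω) * μ4 (z ω) - μ3 (z ω) ^ 2))
        * (r ω - ah (z ω) * pr ω - bh (z ω) * pr ω ^ 2)) μ) :
    (μ[fun ω => ah (z ω)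
        + ((μ4 (z ω) * pr ω - μ3 (z ω) * pr ω ^ 2)
              / (μ2 (z ω) * μ4 (z ω) - μ3 (z ω) ^ 2))
          * (r ω - ah (z ω) * pr ω - bh (z ω) * pr ω ^ 2) |
      MeasurableSpace.comap z inferInstance] =ᵐ[μ] fun ω => a (z ω)) ∧
    (μ[fun ω => bh (z ω)
        + ((μ2 (z ω) * pr ω ^ 2 - μ3 (z ω) * pr ω)
              / (μ2 (z ω) * μ4 (z ω) - μ3 (z ω) ^ 2))
          * (r ω - ah (z ω) * pr ω - bh (z ω) * pr ω ^ 2) |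
      MeasurableSpace.comap z inferInstance] =ᵐ[μ] fun ω => b (z ω)) := by
  set m := MeasurableSpace.comap z (inferInstance : MeasurableSpace Z)
  set g := MeasurableSpace.comap (fun ω => (pr ω, z ω)) (inferInstance : MeasurableSpace (ℝ × Z))
  have hzg : Measurable[g] z := measurable_snd.comp (comap_measurable _)
  have hpg : StronglyMeasurable[g] pr :=
    (measurable_fst.comp (comap_measurable _)).stronglyMeasurable
  have hmg : m ≤ g := hzg.comap_le
  have hg : g ≤ _ := (hpr.prodMk hz).comap_le
  have hm := hmg.trans hg
  have hcomp {m' : MeasurableSpace Ω} (hz' : Measurable[m'] z) {f : Z → ℝ} (hf : Measurable f) :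
      StronglyMeasurable[m'] fun ω => f (z ω) :=
    (hf.comp hz').stronglyMeasurable
  have hzm : Measurable[m] z := comap_measurable z
  have he := condExp_quadratic_residual hg hpg (hcomp hzg hahm) (hcomp hzg hbhm) hintr hinte hrev
  have hα := hcomp hzm (by fun_prop : Measurable fun x => a x - ah x)
  have hβ := hcomp hzm (by fun_prop : Measurable fun x => b x - bh x)
  have hQ₁ := condExp_pow_mul_of_condExp_eq_quadratic hmg hg 1 hpg hα hβ he hinte
    (by simpa only [pow_one] using hintpe) hintp2 hintp3 hm2 hm3
  have hQ₂ := condExp_pow_mul_of_condExp_eq_quadratic hmg hg 2 hpg hα hβ he hinte hintp2e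
    hintp3 hintp4 hm3 hm4
  simp only [pow_one] at hQ₁
  constructor
  · refine condExp_add_quadratic_weight_mul hm (hcomp hzm hahm)
      (hcomp hzm (by fun_prop : Measurable fun x => μ4 x / (μ2 x * μ4 x - μ3 x ^ 2)))
      (hcomp hzm (by fun_prop : Measurable fun x => -(μ3 x / (μ2 x * μ4 x - μ3 x ^ 2))))
      (fun ω => by ring) hintpe hintp2e hQ₁ hQ₂ hintaDR ?_
    filter_upwards [hD] with ω hω
    linear_combination (a (z ω) - ah (z ω)) * mul_inv_cancel₀ hω
  · refine condExp_add_quadratic_weight_mul hm (hcomp hzm hbhm)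
      (hcomp hzm (by fun_prop : Measurable fun x => -(μ3 x / (μ2 x * μ4 x - μ3 x ^ 2))))
      (hcomp hzm (by fun_prop : Measurable fun x => μ2 x / (μ2 x * μ4 x - μ3 x ^ 2)))
      (fun ω => by ring) hintpe hintp2e hQ₁ hQ₂ hintbDR ?_
    filter_upwards [hD] with ω hω
    linear_combination (b (z ω) - bh (z ω)) * mul_inv_cancel₀ hω

/-- Doubly robust personalized pricing estimators (quadratic revenue):
under `E[r ∣ σ(p,z)] = a(z)p + b(z)p²`, `E[p^k ∣ σ(z)] = μ_k(z)` for `k = 2,3,4` and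
`D(z) = μ₂(z)μ₄(z) − μ₃(z)² ≠ 0` a.s., the doubly robust estimates satisfy
`E[a_DR ∣ σ(z)] = a(z)` and `E[b_DR ∣ σ(z)] = b(z)` almost surely. -/
theorem pricing_quadratic_doubly_robust
    {Ω Z : Type*} [MeasurableSpace Ω] [MeasurableSpace Z]
    (μ : Measure Ω) [IsProbabilityMeasure μ]
    (z : Ω → Z) (pr r : Ω → ℝ)
    (hz : Measurable z) (hpr : Measurable pr) (hr : Measurable r)
    (a b : Z → ℝ) (ham : Measurable a) (hbm : Measurable b)
    (μ2 μ3 μ4 : Z → ℝ) (hμ2m : Measurable μ2) (hμ3m : Measurable μ3) (hμ4m : Measurable μ4)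
    -- quadratic revenue model
    (hrev : μ[r | MeasurableSpace.comap (fun ω => (pr ω, z ω)) inferInstance]
        =ᵐ[μ] fun ω => a (z ω) * pr ω + b (z ω) * pr ω ^ 2)
    -- conditional price moments
    (hm2 : μ[fun ω => pr ω ^ 2 | MeasurableSpace.comap z inferInstance]
        =ᵐ[μ] fun ω => μ2 (z ω))
    (hm3 : μ[fun ω => pr ω ^ 3 | MeasurableSpace.comap z inferInstance]
        =ᵐ[μ] fun ω => μ3 (z ω))
    (hm4 : μ[fun ω => pr ω ^ 4 | MeasurableSpace.comap z inferInstance]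
        =ᵐ[μ] fun ω => μ4 (z ω))
    (hD : ∀ᵐ ω ∂μ, μ2 (z ω) * μ4 (z ω) - μ3 (z ω) ^ 2 ≠ 0)
    -- nuisance estimates
    (ah bh : Z → ℝ) (hahm : Measurable ah) (hbhm : Measurable bh)
    -- all displayed conditional expectations are well defined
    (hintr : Integrable r μ)
    (hintp2 : Integrable (fun ω => pr ω ^ 2) μ)
    (hintp3 : Integrable (fun ω => pr ω ^ 3) μ)
    (hintp4 : Integrable (fun ω => pr ω ^ 4) μ)
    (hinte : Integrable (fun ω => r ω - ah (z ω) * pr ω - bh (z ω) * pr ω ^ 2) μ)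
    (hintpe : Integrable (fun ω =>
      pr ω * (r ω - ah (z ω) * pr ω - bh (z ω) * pr ω ^ 2)) μ)
    (hintp2e : Integrable (fun ω =>
      pr ω ^ 2 * (r ω - ah (z ω) * pr ω - bh (z ω) * pr ω ^ 2)) μ)
    (hintaDR : Integrable (fun ω => ah (z ω)
      + ((μ4 (z ω) * pr ω - μ3 (z ω) * pr ω ^ 2)
            / (μ2 (z ω) * μ4 (z ω) - μ3 (z ω) ^ 2))
        * (r ω - ah (z ω) * pr ω - bh (z ω) * pr ω ^ 2)) μ)
    (hintbDR : Integrable (fun ω => bh (z ω)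
      + ((μ2 (z ω) * pr ω ^ 2 - μ3 (z ω) * pr ω)
            / (μ2 (z ω) * μ4 (z ω) - μ3 (z ω) ^ 2))
        * (r ω - ah (z ω) * pr ω - bh (z ω) * pr ω ^ 2)) μ) :
    (μ[fun ω => ah (z ω)
        + ((μ4 (z ω) * pr ω - μ3 (z ω) * pr ω ^ 2)
              / (μ2 (z ω) * μ4 (z ω) - μ3 (z ω) ^ 2))
          * (r ω - ah (z ω) * pr ω - bh (z ω) * pr ω ^ 2) |
      MeasurableSpace.comap z inferInstance] =ᵐ[μ] fun ω => a (z ω)) ∧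
    (μ[fun ω => bh (z ω)
        + ((μ2 (z ω) * pr ω ^ 2 - μ3 (z ω) * pr ω)
              / (μ2 (z ω) * μ4 (z ω) - μ3 (z ω) ^ 2))
          * (r ω - ah (z ω) * pr ω - bh (z ω) * pr ω ^ 2) |
      MeasurableSpace.comap z inferInstance] =ᵐ[μ] fun ω => b (z ω)) :=
  pricing_quadratic_doubly_robust_general μ z pr r hz hpr a b ham hbm μ2 μ3 μ4 hμ2m hμ3m hμ4m hrev
    hm2 hm3 hm4 hD ah bh hahm hbhm hintr hintp2 hintp3 hintp4 hinte hintpe hintp2e hintaDR hintbDR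
end
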